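/- Let G be a DAG with topological order v_1,...,v_n and G_i = G[{v_1,...,v_i}]. If A is a frontier antichain of G_{i-1} such that no vertex of A reaches v_i in G_i, then A ∪ {v_i} is a frontier antichain of G_i. -/

import Mathlib

open Relation

/-!
In `G_{i+1}` the new vertex `v_i` is a sink, and since edges go up in the topological order, a
path of `G_{i+1}` ending below `i` is a path of `G_i`. So if an antichain `B` of `G_{i+1}`
dominated `A ∪ {v_i}`, every vertex of `B.erase v_i` would be reached from `A` inside `G_i`.
An antichain of `G_i` reached from a frontier antichain `A` and at least as large as `A` must be
`A` itself (a subset of size `|A|` dominates `A`, hence equals it, and any further vertex would be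
reached from a member of the antichain). Counting then forces `B = A ∪ {v_i}`.
-/

/-- A directed graph (edge relation `E`) is acyclic. -/
def Acyclic {V : Type*} (E : V → V → Prop) : Prop := ∀ v, ¬ TransGen E v v

/-- `A` is an antichain: its vertices are pairwise non-reachable
(reachability = reflexive-transitive closure of `E`). -/
def IsAC {V : Type*} (E : V → V → Prop) (A : Finset V) : Prop :=
  ∀ a ∈ A, ∀ b ∈ A, a ≠ b → ¬ ReflTransGen E a b

/-- `B` dominates `A`: same size, and every vertex of `B` is reachable from some vertex of `A`. -/
def Dom {V : Type*} (E : V → V → Prop) (B A : Finset V) : Prop :=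
  B.card = A.card ∧ ∀ b ∈ B, ∃ a ∈ A, ReflTransGen E a b

/-- A frontier antichain: an antichain not dominated by any other antichain. -/
def Frontier {V : Type*} (E : V → V → Prop) (A : Finset V) : Prop :=
  IsAC E A ∧ ∀ B : Finset V, IsAC E B → B ≠ A → ¬ Dom E B A

/-- The identity order on `Fin n` is a topological order for `E`. -/
def Topo {n : ℕ} (E : Fin n → Fin n → Prop) : Prop := ∀ u v, E u v → (u : ℕ) < (v : ℕ)

/-- The edge relation of the induced subgraph `G_i` on the first `i` vertices. -/
def Erest {n : ℕ} (E : Fin n → Fin n → Prop) (i : ℕ) (u v : Fin n) : Prop :=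
  E u v ∧ (u : ℕ) < i ∧ (v : ℕ) < i

/-- `A` is a frontier antichain of the induced subgraph `G_i` on the first `i` vertices. -/
def FrontierIn {n : ℕ} (E : Fin n → Fin n → Prop) (i : ℕ) (A : Finset (Fin n)) : Prop :=
  (∀ a ∈ A, (a : ℕ) < i) ∧ IsAC (Erest E i) A ∧
  ∀ B : Finset (Fin n), (∀ b ∈ B, (b : ℕ) < i) → IsAC (Erest E i) B → B ≠ A →
    ¬ Dom (Erest E i) B A

/-- The support `S_i`: union of all frontier antichains of `G_i`. -/
def SupportIn {n : ℕ} (E : Fin n → Fin n → Prop) (i : ℕ) : Set (Fin n) :=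
  {v | ∃ A : Finset (Fin n), FrontierIn E i A ∧ v ∈ A}

section Antichain

variable {V : Type*} {r s : V → V → Prop} {A B : Finset V}

theorem isAC_iff_isAntichain : IsAC r A ↔ IsAntichain (ReflTransGen r) (A : Set V) :=
  Iff.rfl

theorem IsAC.subset (hB : IsAC r B) (hAB : A ⊆ B) : IsAC r A :=
  (isAC_iff_isAntichain.1 hB).subset (Finset.coe_subset.2 hAB)

theorem IsAC.mono (hA : IsAC s A) (hrs : r ≤ s) : IsAC r A :=
  (isAC_iff_isAntichain.1 hA).mono (ReflTransGen.mono hrs)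

end Antichain

section Restriction

variable {n : ℕ} {E : Fin n → Fin n → Prop}

theorem erest_mono {i j : ℕ} (hij : i ≤ j) : Erest E i ≤ Erest E j :=
  fun _ _ ⟨he, hu, hw⟩ => ⟨he, hu.trans_le hij, hw.trans_le hij⟩

theorem Topo.reflTransGen_erest_of_lt (hE : Topo E) {i j : ℕ} {u w : Fin n}
    (h : ReflTransGen (Erest E j) u w) (hw : (w : ℕ) < i) : ReflTransGen (Erest E i) u w := by
  induction h with
  | refl => rfl
  | tail _ hvw ih =>
    have hv := (hE _ _ hvw.1).trans hw
    exact (ih hv).tail ⟨hvw.1, hv, hw⟩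

theorem Topo.reflTransGen_erest_succ_self_iff (hE : Topo E) {i : ℕ} (hi : i < n) (w : Fin n) :
    ReflTransGen (Erest E (i + 1)) ⟨i, hi⟩ w ↔ w = ⟨i, hi⟩ := by
  refine reflTransGen_iff_eq fun w ⟨he, _, hw⟩ => ?_
  have := hE _ _ he
  simp only at this
  omega

theorem Topo.exists_reflTransGen_erest_of_mem_insert (hE : Topo E) {i : ℕ} (hi : i < n)
    {A : Finset (Fin n)} {a b : Fin n} (ha : a ∈ insert ⟨i, hi⟩ A)
    (hab : ReflTransGen (Erest E (i + 1)) a b) (hb : (b : ℕ) < i) :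
    ∃ a ∈ A, ReflTransGen (Erest E i) a b := by
  rcases Finset.mem_insert.1 ha with rfl | ha
  · rw [(hE.reflTransGen_erest_succ_self_iff hi b).1 hab] at hb
    exact absurd hb (lt_irrefl i)
  · exact ⟨a, ha, hE.reflTransGen_erest_of_lt hab hb⟩

theorem FrontierIn.eq_of_reachable {i : ℕ} {A B : Finset (Fin n)} (hA : FrontierIn E i A)
    (hBlt : ∀ b ∈ B, (b : ℕ) < i) (hBac : IsAC (Erest E i) B)
    (hreach : ∀ b ∈ B, ∃ a ∈ A, ReflTransGen (Erest E i) a b) (hcard : A.card ≤ B.card) :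
    B = A := by
  obtain ⟨-, -, hAfr⟩ := hA
  obtain ⟨C, hCB, hCcard⟩ := Finset.exists_subset_card_eq hcard
  have hCA : C = A := by
    by_contra hne
    exact hAfr C (fun c hc => hBlt c (hCB hc)) (hBac.subset hCB) hne
      ⟨hCcard, fun c hc => hreach c (hCB hc)⟩
  subst hCA
  by_contra hne
  obtain ⟨b, hbB, hbC⟩ := Finset.exists_of_ssubset
    (Finset.ssubset_iff_subset_ne.2 ⟨hCB, Ne.symm hne⟩)
  obtain ⟨a, haC, hab⟩ := hreach b hbB
  exact hBac a (hCB haC) b hbB (ne_of_mem_of_not_mem haC hbC) hab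

end Restriction

/-- if a frontier antichain `A` of `G_i` does not reach the new vertex
`v_i = ⟨i, hi⟩`, then `A ∪ {v_i}` is a frontier antichain of `G_{i+1}`. -/
theorem all_type1 {n : ℕ} (E : Fin n → Fin n → Prop) (hE : Topo E)
    (i : ℕ) (hi : i < n) (A : Finset (Fin n))
    (hA : FrontierIn E i A)
    (hreach : ∀ a ∈ A, ¬ ReflTransGen (Erest E (i + 1)) a ⟨i, hi⟩) :
    FrontierIn E (i + 1) (insert ⟨i, hi⟩ A) := by
  set v : Fin n := ⟨i, hi⟩
  have hvA : v ∉ A := fun h => (hA.1 v h).false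
  refine ⟨?_, ?_, ?_⟩
  · simp only [Finset.forall_mem_insert]
    exact ⟨i.lt_succ_self, fun a ha => (hA.1 a ha).trans i.lt_succ_self⟩
  · rw [isAC_iff_isAntichain, Finset.coe_insert]
    refine (isAC_iff_isAntichain.1 fun a ha b hb hab h => ?_).insert
      (fun a ha _ => hreach a ha) (fun a _ hva h => ?_)
    · exact hA.2.1 a ha b hb hab (hE.reflTransGen_erest_of_lt h (hA.1 b hb))
    · exact hva ((hE.reflTransGen_erest_succ_self_iff hi a).1 h).symm
  rintro B hBlt hBac hBne ⟨hBcard, hBdom⟩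
  have hlt (b) (hb : b ∈ B.erase v) : (b : ℕ) < i :=
    lt_of_le_of_ne (Nat.lt_succ_iff.1 (hBlt b (Finset.mem_of_mem_erase hb)))
      fun h => Finset.ne_of_mem_erase hb (Fin.ext h)
  have hBA : B.erase v = A := by
    refine hA.eq_of_reachable hlt ((hBac.subset (B.erase_subset v)).mono (erest_mono i.le_succ))
      (fun b hb => ?_) ?_
    · obtain ⟨a, ha, hab⟩ := hBdom b (Finset.mem_of_mem_erase hb)
      exact hE.exists_reflTransGen_erest_of_mem_insert hi ha hab (hlt b hb)
    · rw [Finset.card_insert_of_notMem hvA] at hBcard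
      have := Finset.pred_card_le_card_erase (a := v) (s := B)
      omega
  refine hBne (Finset.eq_of_subset_of_card_le ?_ hBcard.ge)
  rw [← hBA]
  exact Finset.insert_erase_subset v B
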